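/- arXiv:1612.01128 — 2 statements merged into one kernel-verified Lean document; each statement's English description precedes it below -/
import Mathlib

section
/- Let K be a centrally symmetric convex body in R^n, and for r > r_J let E_r be an ellipsoid of volume r^n κ_n maximizing vol_n(K ∩ E) among ellipsoids of that volume. Then as r decreases to r_J, the ellipsoids E_r converge in Hausdorff distance to the John ellipsoid J(K). -/
open MeasureTheory Metric Set Filter Pointwise
open scoped ENNReal

noncomputable section

/-- Euclidean space `ℝⁿ`. -/
abbrev Euc (n : ℕ) := EuclideanSpace ℝ (Fin n)

/-- The closed Euclidean unit ball. -/
def unitBall (n : ℕ) : Set (Euc n) := closedBall 0 1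

/-- An ellipsoid: an image of the closed unit ball under an invertible affine map. -/
def IsEllipsoid (n : ℕ) (s : Set (Euc n)) : Prop :=
  ∃ (T : Euc n ≃ₗ[ℝ] Euc n) (x : Euc n), s = (fun y => T y + x) '' unitBall n

/-- The maximal intersection function `m(r)`. -/
def mfun (n : ℕ) (K : Set (Euc n)) (r : ℝ) : ℝ≥0∞ :=
  ⨆ (s : Set (Euc n)) (_ : IsEllipsoid n s ∧
      volume s = ENNReal.ofReal (r ^ n) * volume (unitBall n)), volume (K ∩ s)

/-- A finite Borel measure (on the sphere) is isotropic if
`∫ ⟨x,θ⟩² dμ = μ(Sⁿ⁻¹)/n` for all unit vectors `θ`. -/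
def IsIsotropic (n : ℕ) (μ : Measure (Euc n)) : Prop :=
  ∀ θ : Euc n, ‖θ‖ = 1 → ∫ x, (inner ℝ x θ : ℝ) ^ 2 ∂μ = (μ Set.univ).toReal / n

/-- `K` is in maximal intersection position of radius `r`:
`vol (K ∩ r B) ≥ vol (K ∩ r T B)` for every `T ∈ SLₙ`. -/
def MaxIntersectionPos (n : ℕ) (K : Set (Euc n)) (r : ℝ) : Prop :=
  ∀ T : Euc n →ₗ[ℝ] Euc n, LinearMap.det T = 1 →
    volume (K ∩ r • (T '' unitBall n)) ≤ volume (K ∩ r • unitBall n)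

/-- The spherical surface area measure: the `(n-1)`-dimensional Hausdorff measure
restricted to the unit sphere. -/
def sphσ (n : ℕ) : Measure (Euc n) := (μH[(n : ℝ) - 1]).restrict (sphere 0 1)

namespace JohnAux

variable {n : ℕ}

def ellC (f : Euc n →L[ℝ] Euc n) (x : Euc n) : Set (Euc n) :=
  (fun y => f y + x) '' unitBall n

lemma volume_unitBall_pos : 0 < volume (unitBall n) :=
  lt_of_lt_of_le (measure_ball_pos volume (0 : Euc n) one_pos)
    (measure_mono ball_subset_closedBall)

lemma volume_unitBall_ne_top : volume (unitBall n) ≠ ⊤ :=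
  (isCompact_closedBall (0 : Euc n) 1).measure_lt_top.ne

lemma volume_affine_image (f : Euc n →L[ℝ] Euc n) (x : Euc n) (S : Set (Euc n)) :
    volume ((fun y => f y + x) '' S)
      = ENNReal.ofReal |LinearMap.det (f : Euc n →ₗ[ℝ] Euc n)| * volume S := by
  have : (fun y => f y + x) '' S = (fun z => z + x) '' ((f : Euc n →ₗ[ℝ] Euc n) '' S) := by
    rw [Set.image_image]; rfl
  rw [this, Set.image_add_right, measure_preimage_add_right,
    Measure.addHaar_image_linearMap]

lemma volume_ellC (f : Euc n →L[ℝ] Euc n) (x : Euc n) :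
    volume (ellC f x)
      = ENNReal.ofReal |LinearMap.det (f : Euc n →ₗ[ℝ] Euc n)| * volume (unitBall n) :=
  volume_affine_image f x _


lemma ellC_isCompact (f : Euc n →L[ℝ] Euc n) (x : Euc n) : IsCompact (ellC f x) :=
  (isCompact_closedBall 0 1).image (by fun_prop)

lemma ellC_convex (f : Euc n →L[ℝ] Euc n) (x : Euc n) : Convex ℝ (ellC f x) := by
  have h1 : Convex ℝ ((f : Euc n →ₗ[ℝ] Euc n) '' unitBall n) :=
    (convex_closedBall (0 : Euc n) 1).linear_image _
  have h2 := h1.translate x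
  have : (fun y => f y + x) '' unitBall n
      = (fun z => x + z) '' ((f : Euc n →ₗ[ℝ] Euc n) '' unitBall n) := by
    rw [Set.image_image]; simp [add_comm]
  rw [ellC, this]; exact h2

lemma mem_ellC_self (f : Euc n →L[ℝ] Euc n) (x : Euc n) : x ∈ ellC f x :=
  ⟨0, by simp [unitBall], by simp⟩

lemma isEllipsoid_ellC {f : Euc n →L[ℝ] Euc n} (x : Euc n)
    (hf : LinearMap.det (f : Euc n →ₗ[ℝ] Euc n) ≠ 0) : IsEllipsoid n (ellC f x) := by
  refine ⟨LinearMap.equivOfDetNeZero (f : Euc n →ₗ[ℝ] Euc n) hf, x, ?_⟩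
  have : ⇑(LinearMap.equivOfDetNeZero (f : Euc n →ₗ[ℝ] Euc n) hf) = ⇑f := by
    ext z; rfl
  rw [this]; rfl

lemma exists_ellC {s : Set (Euc n)} (hs : IsEllipsoid n s) :
    ∃ (f : Euc n →L[ℝ] Euc n) (x : Euc n),
      LinearMap.det (f : Euc n →ₗ[ℝ] Euc n) ≠ 0 ∧ s = ellC f x := by
  obtain ⟨T, x, rfl⟩ := hs
  refine ⟨LinearMap.toContinuousLinearMap (T : Euc n →ₗ[ℝ] Euc n), x, ?_, ?_⟩
  · simp only [LinearMap.coe_toContinuousLinearMap]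
    exact (LinearEquiv.isUnit_det' T).ne_zero
  · rfl

lemma hausdorffDist_ellC_le (f g : Euc n →L[ℝ] Euc n) (x y : Euc n) :
    hausdorffDist (ellC f x) (ellC g y) ≤ ‖f - g‖ + dist x y := by
  have key : ∀ (f g : Euc n →L[ℝ] Euc n) (x y : Euc n), ∀ z ∈ ellC f x,
      ∃ w ∈ ellC g y, dist z w ≤ ‖f - g‖ + dist x y := by
    rintro f g x y z ⟨b, hb, rfl⟩
    refine ⟨g b + y, Set.mem_image_of_mem _ hb, ?_⟩
    have hb1 : ‖b‖ ≤ 1 := by simpa [unitBall] using hb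
    calc dist (f b + x) (g b + y) ≤ dist (f b) (g b) + dist x y := dist_add_add_le _ _ _ _
      _ ≤ ‖f - g‖ + dist x y := by
          have : dist (f b) (g b) = ‖(f - g) b‖ := by
            rw [dist_eq_norm]; simp
          rw [this]
          exact add_le_add_left (le_trans ((f - g).le_opNorm b)
            (by nlinarith [norm_nonneg (f - g)])) _
  refine hausdorffDist_le_of_mem_dist (by positivity) (key f g x y) ?_
  intro z hz
  obtain ⟨w, hw, hd⟩ := key g f y x z hz
  exact ⟨w, hw, by rwa [norm_sub_rev, dist_comm y x] at hd⟩

lemma norm_le_of_mem_ellC {f : Euc n →L[ℝ] Euc n} {x z : Euc n} (hz : z ∈ ellC f x) :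
    ‖z‖ ≤ ‖f‖ + ‖x‖ := by
  obtain ⟨b, hb, rfl⟩ := hz
  have hb1 : ‖b‖ ≤ 1 := by simpa [unitBall] using hb
  calc ‖f b + x‖ ≤ ‖f b‖ + ‖x‖ := norm_add_le _ _
    _ ≤ ‖f‖ + ‖x‖ := by
        have := f.le_opNorm b
        nlinarith [norm_nonneg f]

lemma params_bound_of_subset {f : Euc n →L[ℝ] Euc n} {x : Euc n} {R : ℝ}
    (h : ellC f x ⊆ closedBall 0 R) : ‖x‖ ≤ R ∧ ‖f‖ ≤ 2 * R := by
  have hx : ‖x‖ ≤ R := by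
    have := h (mem_ellC_self f x); simpa [mem_closedBall_zero_iff] using this
  refine ⟨hx, f.opNorm_le_bound (by nlinarith [norm_nonneg x, (norm_nonneg x).trans hx]) ?_⟩
  intro z
  rcases eq_or_ne z 0 with rfl | hz0
  · simp
  have hz : (0:ℝ) < ‖z‖ := norm_pos_iff.2 hz0
  have hmem : f (‖z‖⁻¹ • z) + x ∈ closedBall (0 : Euc n) R := by
    apply h; exact ⟨‖z‖⁻¹ • z, by simp [unitBall, norm_smul, abs_of_pos hz,
      inv_mul_cancel₀ hz.ne'], rfl⟩
  have h1 : ‖f (‖z‖⁻¹ • z)‖ ≤ 2 * R := by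
    rw [mem_closedBall_zero_iff] at hmem
    have := norm_add_le (f (‖z‖⁻¹ • z) + x) (-x)
    simp only [add_neg_cancel_right, norm_neg] at this
    linarith
  have : f z = ‖z‖ • f (‖z‖⁻¹ • z) := by
    rw [← f.map_smul]; congr 1; rw [smul_smul, mul_inv_cancel₀ hz.ne', one_smul]
  rw [this, norm_smul, Real.norm_eq_abs, abs_of_pos hz, mul_comm (2*R)]
  exact mul_le_mul_of_nonneg_left h1 hz.le


open scoped RealInnerProductSpace

lemma cone_bound {K C : Set (Euc n)} (hC : Convex ℝ C) (hCcomp : IsCompact C)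
    (hK : IsClosed K) {R : ℝ} (hR : 0 < R) (hKR : K ⊆ closedBall 0 R)
    (N : ℕ) (hvol : volume C <
      (↑(N + 1) : ℝ≥0∞) * (ENNReal.ofReal ((2:ℝ)⁻¹ ^ n) * volume (K ∩ C)))
    {x : Euc n} (hx : x ∈ C) : ‖x‖ ≤ 8 * R * (N + 1) := by
  by_contra hcon
  push_neg at hcon
  set ρ := ‖x‖ with hρdef
  have hρ : 0 < ρ := lt_trans (by positivity) hcon
  set u : Euc n := ρ⁻¹ • x with hu
  have hu1 : ‖u‖ = 1 := by
    rw [hu, norm_smul, Real.norm_eq_abs, abs_of_pos (inv_pos.2 hρ), inv_mul_cancel₀ hρ.ne']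
  have hxu : ⟪x, u⟫ = ρ := by
    rw [hu, real_inner_smul_right, real_inner_self_eq_norm_sq, ← hρdef]
    field_simp [hρ.ne']
  set S := K ∩ C with hS
  have hSsub : ∀ s ∈ S, |⟪s, u⟫| ≤ R := by
    intro s hs
    calc |⟪s,u⟫| ≤ ‖s‖ * ‖u‖ := abs_real_inner_le_norm _ _
      _ ≤ R := by rw [hu1, mul_one]; exact mem_closedBall_zero_iff.1 (hKR hs.1)
  set t : ℕ → ℝ := fun i => 1 - 4*R*i/ρ with ht
  have htmem : ∀ i : ℕ, i ≤ N → (2:ℝ)⁻¹ ≤ t i ∧ t i ≤ 1 := by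
    intro i hi
    have hiN : (i:ℝ) ≤ N := Nat.cast_le.2 hi
    have hN0 : (0:ℝ) ≤ N := Nat.cast_nonneg N
    have hi0 : (0:ℝ) ≤ i := Nat.cast_nonneg i
    constructor
    · have h2 : 8*R*(N+1) < ρ := hcon
      have : 4*R*(i:ℝ)/ρ ≤ 2⁻¹ := by
        rw [div_le_iff₀ hρ]; nlinarith
      simp only [ht]; linarith
    · have : 0 ≤ 4*R*(i:ℝ)/ρ := by positivity
      simp only [ht]; linarith
  have htpos : ∀ i : ℕ, i ≤ N → 0 < t i := fun i hi => lt_of_lt_of_le (by norm_num) (htmem i hi).1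
  set T : ℕ → Set (Euc n) := fun i => (fun s => t i • s + (1 - t i) • x) '' S with hT
  have hTsub : ∀ i, i ≤ N → T i ⊆ C := by
    rintro i hi p ⟨s, hs, rfl⟩
    exact hC hs.2 hx (htpos i hi).le (by linarith [(htmem i hi).2]) (by ring)
  have hTvol : ∀ i, i ≤ N → ENNReal.ofReal ((2:ℝ)⁻¹ ^ n) * volume S ≤ volume (T i) := by
    intro i hi
    have h2 : T i = (fun z => z + (1 - t i) • x) '' (t i • S) := by
      ext p
      simp only [hT, Set.mem_image, Set.mem_smul_set]
      constructor
      · rintro ⟨s, hs, rfl⟩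
        exact ⟨t i • s, ⟨s, hs, rfl⟩, rfl⟩
      · rintro ⟨q, ⟨s, hs, rfl⟩, hq⟩
        exact ⟨s, hs, hq⟩
    rw [h2, Set.image_add_right, measure_preimage_add_right, Measure.addHaar_smul,
      finrank_euclideanSpace_fin]
    apply mul_le_mul_left
    apply ENNReal.ofReal_le_ofReal
    rw [abs_of_nonneg (pow_nonneg (htpos i hi).le n)]
    exact pow_le_pow_left₀ (by norm_num) (htmem i hi).1 n
  have hband : ∀ i, i ≤ N → ∀ p ∈ T i, |⟪p, u⟫ - 4*R*i| ≤ R := by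
    rintro i hi p ⟨s, hs, rfl⟩
    have h1 : ⟪t i • s + (1 - t i) • x, u⟫ = t i * ⟪s,u⟫ + (1 - t i) * ρ := by
      rw [inner_add_left, real_inner_smul_left, real_inner_smul_left, hxu]
    have h2 : (1 - t i) * ρ = 4*R*i := by
      simp only [ht]; field_simp; ring
    rw [h1, h2, add_sub_cancel_right, abs_mul]
    have h3 := hSsub s hs
    have h4 : |t i| ≤ 1 := abs_le.2 ⟨by linarith [htpos i hi], (htmem i hi).2⟩
    nlinarith [abs_nonneg (⟪s,u⟫), abs_nonneg (t i)]
  have hpd : Set.PairwiseDisjoint ↑(Finset.range (N+1)) T := by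
    intro i hi j hj hij
    simp only [Finset.coe_range, Set.mem_Iio] at hi hj
    rw [Function.onFun, Set.disjoint_left]
    intro p hpi hpj
    have h1 := hband i (by omega) p hpi
    have h2 := hband j (by omega) p hpj
    have h3 : |4*R*(i:ℝ) - 4*R*(j:ℝ)| ≤ 2*R := by
      have := abs_sub_abs_le_abs_sub (⟪p,u⟫ - 4*R*i) (⟪p,u⟫ - 4*R*j)
      have h5 : (4*R*(j:ℝ) - 4*R*(i:ℝ)) = (⟪p,u⟫ - 4*R*i) - (⟪p,u⟫ - 4*R*j) := by ring
      calc |4*R*(i:ℝ) - 4*R*(j:ℝ)| = |(⟪p,u⟫ - 4*R*j) - (⟪p,u⟫ - 4*R*i)| := by ring_nf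
        _ ≤ |⟪p,u⟫ - 4*R*j| + |⟪p,u⟫ - 4*R*i| := abs_sub _ _
        _ ≤ 2*R := by linarith
    have h6 : (1:ℝ) ≤ |(i:ℝ) - (j:ℝ)| := by
      have : i ≠ j := hij
      rcases Nat.lt_or_ge i j with h | h
      · rw [abs_sub_comm, abs_of_nonneg (sub_nonneg.2 (Nat.cast_le.2 h.le))]
        have : (i:ℝ) + 1 ≤ j := by exact_mod_cast h
        linarith
      · have hlt : j < i := lt_of_le_of_ne h (Ne.symm this)
        rw [abs_of_nonneg (sub_nonneg.2 (Nat.cast_le.2 hlt.le))]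
        have : (j:ℝ) + 1 ≤ i := by exact_mod_cast hlt
        linarith
    have h7 : |4*R*((i:ℝ) - (j:ℝ))| ≤ 2*R := by
      rw [show 4*R*((i:ℝ)-(j:ℝ)) = 4*R*(i:ℝ) - 4*R*(j:ℝ) from by ring]
      exact h3
    rw [abs_mul, abs_of_pos (show (0:ℝ) < 4*R from by linarith)] at h7
    nlinarith
  have hSm : IsCompact S := hCcomp.inter_left hK
  have hmeas : ∀ i ∈ Finset.range (N+1), MeasurableSet (T i) := by
    intro i hi
    exact ((hSm.image (by fun_prop)).isClosed).measurableSet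
  have hsum : (↑(N + 1) : ℝ≥0∞) * (ENNReal.ofReal ((2:ℝ)⁻¹ ^ n) * volume S) ≤ volume C := by
    calc (↑(N + 1) : ℝ≥0∞) * (ENNReal.ofReal ((2:ℝ)⁻¹ ^ n) * volume S)
        = ∑ i ∈ Finset.range (N+1), (ENNReal.ofReal ((2:ℝ)⁻¹ ^ n) * volume S) := by
          rw [Finset.sum_const, Finset.card_range, nsmul_eq_mul]
      _ ≤ ∑ i ∈ Finset.range (N+1), volume (T i) := by
          refine Finset.sum_le_sum fun i hi => hTvol i ?_
          simpa [Nat.lt_succ_iff] using Finset.mem_range.1 hi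
      _ = volume (⋃ i ∈ Finset.range (N+1), T i) := (measure_biUnion_finset hpd hmeas).symm
      _ ≤ volume C := by
          refine measure_mono ?_
          refine Set.iUnion₂_subset fun i hi => hTsub i ?_
          simpa [Nat.lt_succ_iff] using Finset.mem_range.1 hi
  exact absurd hvol (not_lt.2 hsum)


lemma neg_ellC (f : Euc n →L[ℝ] Euc n) (x : Euc n) : -(ellC f x) = ellC (-f) (-x) := by
  ext z
  simp only [Set.mem_neg, ellC, Set.mem_image, ContinuousLinearMap.neg_apply]
  constructor
  · rintro ⟨b, hb, hbz⟩
    refine ⟨b, hb, ?_⟩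
    have h2 : -(f b + x) = z := by rw [hbz, neg_neg]
    rw [← h2]; abel
  · rintro ⟨b, hb, hbz⟩
    exact ⟨b, hb, by rw [← hbz]; abel⟩

lemma smul_ellC (c : ℝ) (f : Euc n →L[ℝ] Euc n) (x : Euc n) :
    c • ellC f x = ellC (c • f) (c • x) := by
  ext z
  simp only [ellC, Set.mem_smul_set, Set.mem_image, ContinuousLinearMap.smul_apply]
  constructor
  · rintro ⟨q, ⟨b, hb, rfl⟩, rfl⟩
    exact ⟨b, hb, by rw [smul_add]⟩
  · rintro ⟨b, hb, rfl⟩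
    exact ⟨f b + x, ⟨b, hb, rfl⟩, by rw [smul_add]⟩

end JohnAux

set_option maxHeartbeats 2000000 in
set_option synthInstance.maxHeartbeats 400000 in
theorem maximizing_ellipsoids_tendsto_john (n : ℕ) (K : Set (Euc n))
    (hKconv : Convex ℝ K) (hKcomp : IsCompact K) (hKint : (interior K).Nonempty)
    (hKsymm : K = -K)
    (J : Set (Euc n)) (hJe : IsEllipsoid n J) (hJsub : J ⊆ K)
    (hJmax : ∀ s : Set (Euc n), IsEllipsoid n s → s ⊆ K → volume s ≤ volume J)
    (hJuniq : ∀ s : Set (Euc n), IsEllipsoid n s → s ⊆ K → volume s = volume J → s = J)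
    (rJ : ℝ) (hrJ : 0 < rJ)
    (hvolJ : volume J = ENNReal.ofReal (rJ ^ n) * volume (unitBall n))
    (Er : ℝ → Set (Euc n))
    (hEr : ∀ r : ℝ, rJ < r → IsEllipsoid n (Er r) ∧
      volume (Er r) = ENNReal.ofReal (r ^ n) * volume (unitBall n) ∧
      ∀ s : Set (Euc n), IsEllipsoid n s →
        volume s = ENNReal.ofReal (r ^ n) * volume (unitBall n) →
        volume (K ∩ s) ≤ volume (K ∩ Er r)) :
    Tendsto (fun r => Metric.hausdorffDist (Er r) J)
      (nhdsWithin rJ (Set.Ioi rJ)) (nhds 0) := by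
  classical
  have hκ0 : volume (unitBall n) ≠ 0 := JohnAux.volume_unitBall_pos.ne'
  have hκt : volume (unitBall n) ≠ ⊤ := JohnAux.volume_unitBall_ne_top
  set κ := volume (unitBall n) with hκdef
  have hcancel : ∀ a b : ℝ, 0 ≤ a → 0 ≤ b →
      ENNReal.ofReal a * κ = ENNReal.ofReal b * κ → a = b := by
    intro a b ha hb h
    have h2 : ENNReal.ofReal a = ENNReal.ofReal b := by
      calc ENNReal.ofReal a = ENNReal.ofReal a * κ * κ⁻¹ := by
            rw [mul_assoc, ENNReal.mul_inv_cancel hκ0 hκt, mul_one]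
        _ = ENNReal.ofReal b * κ * κ⁻¹ := by rw [h]
        _ = ENNReal.ofReal b := by rw [mul_assoc, ENNReal.mul_inv_cancel hκ0 hκt, mul_one]
    exact (ENNReal.ofReal_eq_ofReal_iff ha hb).1 h2
  obtain ⟨fJ, xJ, hfJdet, hJeq⟩ := JohnAux.exists_ellC hJe
  have hKclosed : IsClosed K := hKcomp.isClosed
  have hKne : K.Nonempty := hKint.mono interior_subset
  have hJconv : Convex ℝ J := hJeq ▸ JohnAux.ellC_convex fJ xJ
  have hdetJ : |LinearMap.det (fJ : Euc n →ₗ[ℝ] Euc n)| = rJ ^ n := by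
    apply hcancel _ _ (abs_nonneg _) (pow_nonneg hrJ.le n)
    rw [← JohnAux.volume_ellC, ← hJeq, hvolJ]
  have hnegK : -K = K := by nth_rewrite 2 [hKsymm]; rfl
  have hdet_negJ : LinearMap.det ((-fJ : Euc n →L[ℝ] Euc n) : Euc n →ₗ[ℝ] Euc n) ≠ 0 := by
    have : ((-fJ : Euc n →L[ℝ] Euc n) : Euc n →ₗ[ℝ] Euc n)
        = (-1 : ℝ) • (fJ : Euc n →ₗ[ℝ] Euc n) := by
      simp
    rw [this, LinearMap.det_smul]
    intro h
    rcases mul_eq_zero.1 h with h | h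
    · exact absurd h (pow_ne_zero _ (by norm_num))
    · exact hfJdet h
  have hJsymm : -J = J := by
    apply hJuniq
    · rw [hJeq, JohnAux.neg_ellC]
      exact JohnAux.isEllipsoid_ellC _ hdet_negJ
    · intro z hz
      rw [← hnegK]
      exact Set.mem_neg.2 (hJsub (Set.mem_neg.1 hz))
    · rw [hJeq, JohnAux.neg_ellC, JohnAux.volume_ellC, JohnAux.volume_ellC]
      congr 2
      have : ((-fJ : Euc n →L[ℝ] Euc n) : Euc n →ₗ[ℝ] Euc n)
          = (-1 : ℝ) • (fJ : Euc n →ₗ[ℝ] Euc n) := by simp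
      rw [this, LinearMap.det_smul, abs_mul, abs_pow]
      simp
  have h0J : (0 : Euc n) ∈ J := by
    have hxJ : xJ ∈ J := hJeq ▸ JohnAux.mem_ellC_self fJ xJ
    have hxJ' : -xJ ∈ J := by
      rw [← hJsymm]; exact Set.mem_neg.2 (by rwa [neg_neg])
    have := hJconv hxJ hxJ' (by norm_num : (0:ℝ) ≤ 1/2) (by norm_num : (0:ℝ) ≤ 1/2)
      (by norm_num)
    simpa using this
  -- Step (a): lower bound for the maximal intersection
  have hlow : ∀ r : ℝ, rJ < r → volume J ≤ volume (K ∩ Er r) := by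
    intro r hr
    have hr0 : 0 < r := hrJ.trans hr
    set c := r / rJ with hc
    have hc1 : 1 ≤ c := (one_le_div hrJ).2 hr.le
    have hc0 : 0 < c := lt_of_lt_of_le one_pos hc1
    have hdet_s : LinearMap.det ((c • fJ : Euc n →L[ℝ] Euc n) : Euc n →ₗ[ℝ] Euc n)
        = c ^ n * LinearMap.det (fJ : Euc n →ₗ[ℝ] Euc n) := by
      rw [ContinuousLinearMap.coe_smul, LinearMap.det_smul, finrank_euclideanSpace_fin]
    have hdet_ne : LinearMap.det ((c • fJ : Euc n →L[ℝ] Euc n) : Euc n →ₗ[ℝ] Euc n) ≠ 0 := by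
      rw [hdet_s]; exact mul_ne_zero (pow_ne_zero _ hc0.ne') hfJdet
    have hvols : volume (JohnAux.ellC (c • fJ) (c • xJ)) = ENNReal.ofReal (r ^ n) * κ := by
      rw [JohnAux.volume_ellC, hdet_s, abs_mul, abs_of_pos (pow_pos hc0 n), hdetJ]
      congr 2
      rw [hc, div_pow, div_mul_cancel₀]
      exact pow_ne_zero _ hrJ.ne'
    have hJs : J ⊆ JohnAux.ellC (c • fJ) (c • xJ) := by
      rw [← JohnAux.smul_ellC, ← hJeq]
      intro z hz
      have hmem : c⁻¹ • z ∈ J := by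
        have h1 := hJconv hz h0J (inv_nonneg.2 hc0.le)
          (sub_nonneg.2 (inv_le_one_of_one_le₀ hc1)) (by ring)
        simpa using h1
      refine ⟨c⁻¹ • z, hmem, ?_⟩
      show c • c⁻¹ • z = z
      rw [smul_smul, mul_inv_cancel₀ hc0.ne', one_smul]
    obtain ⟨-, -, hmax⟩ := hEr r hr
    calc volume J ≤ volume (K ∩ JohnAux.ellC (c • fJ) (c • xJ)) :=
          measure_mono (Set.subset_inter hJsub hJs)
      _ ≤ volume (K ∩ Er r) := hmax _ (JohnAux.isEllipsoid_ellC _ hdet_ne) hvols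
  -- bounding ball for K
  obtain ⟨R₀, hR₀⟩ := hKcomp.isBounded.subset_closedBall (0 : Euc n)
  set R := max R₀ 1 with hRdef
  have hR1 : (0:ℝ) < R := lt_of_lt_of_le one_pos (le_max_right _ _)
  have hKR : K ⊆ closedBall 0 R := hR₀.trans (closedBall_subset_closedBall (le_max_left _ _))
  -- choose N
  have hvolJne : volume J ≠ 0 := by
    rw [hvolJ]
    exact mul_ne_zero (ENNReal.ofReal_pos.2 (pow_pos hrJ n)).ne' hκ0
  have hvolJt : volume J ≠ ⊤ := by
    rw [hvolJ]; exact ENNReal.mul_ne_top ENNReal.ofReal_ne_top hκt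
  set c0 : ℝ≥0∞ := ENNReal.ofReal ((2:ℝ)⁻¹ ^ n) * volume J with hc0def
  have hc00 : c0 ≠ 0 :=
    mul_ne_zero (ENNReal.ofReal_pos.2 (by positivity)).ne' hvolJne
  have hc0t : c0 ≠ ⊤ := ENNReal.mul_ne_top ENNReal.ofReal_ne_top hvolJt
  set V : ℝ≥0∞ := ENNReal.ofReal ((rJ+1) ^ n) * κ with hVdef
  have hVt : V ≠ ⊤ := ENNReal.mul_ne_top ENNReal.ofReal_ne_top hκt
  obtain ⟨N, hN⟩ := ENNReal.exists_nat_gt (ENNReal.div_lt_top hVt hc00).ne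
  have hNV : V < (↑(N+1) : ℝ≥0∞) * c0 := by
    have h1 : V < N * c0 := by
      rw [← ENNReal.div_lt_iff (Or.inl hc00) (Or.inl hc0t)]
      exact hN
    refine h1.trans_le (mul_le_mul_left ?_ _)
    exact_mod_cast Nat.cast_le.2 (Nat.le_succ N)
  set R' := 8 * R * ((N:ℝ) + 1) with hR'def
  have hR'0 : 0 < R' := by positivity
  have hbdd : ∀ r : ℝ, rJ < r → r < rJ + 1 → Er r ⊆ closedBall 0 R' := by
    intro r h1 h2
    obtain ⟨f, x, hdet, heq⟩ := JohnAux.exists_ellC (hEr r h1).1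
    intro z hz
    rw [mem_closedBall_zero_iff]
    have hconv : Convex ℝ (Er r) := heq ▸ JohnAux.ellC_convex f x
    have hcomp : IsCompact (Er r) := heq ▸ JohnAux.ellC_isCompact f x
    have hvol : volume (Er r) <
        (↑(N + 1) : ℝ≥0∞) * (ENNReal.ofReal ((2:ℝ)⁻¹ ^ n) * volume (K ∩ Er r)) := by
      have hvolEr : volume (Er r) ≤ V := by
        rw [(hEr r h1).2.1, hVdef]
        exact mul_le_mul_left (ENNReal.ofReal_le_ofReal
          (pow_le_pow_left₀ (hrJ.trans h1).le h2.le n)) κ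
      calc volume (Er r) ≤ V := hvolEr
        _ < ↑(N+1) * c0 := hNV
        _ ≤ ↑(N+1) * (ENNReal.ofReal ((2:ℝ)⁻¹ ^ n) * volume (K ∩ Er r)) := by
            rw [hc0def]
            exact mul_le_mul_right (mul_le_mul_right (hlow r h1) _) _
    have := JohnAux.cone_bound hconv hcomp hKclosed hR1 hKR N hvol hz
    simpa [hR'def] using this
  -- main contradiction argument
  rw [Metric.tendsto_nhds]
  intro ε hε
  by_contra hcon
  rw [Filter.not_eventually] at hcon
  obtain ⟨u, hu, huprop⟩ := Filter.exists_seq_forall_of_frequently hcon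
  have huge : ∀ k, ε ≤ hausdorffDist (Er (u k)) J := by
    intro k
    have h := huprop k
    rw [Real.dist_eq, sub_zero, abs_of_nonneg hausdorffDist_nonneg] at h
    exact not_lt.1 h
  have hmem1 : ∀ᶠ k in atTop, u k ∈ Set.Ioi rJ := hu self_mem_nhdsWithin
  have hunhds : Tendsto u atTop (nhds rJ) := hu.mono_right nhdsWithin_le_nhds
  have hmem2 : ∀ᶠ k in atTop, u k < rJ + 1 :=
    hunhds.eventually_lt_const (by linarith)
  obtain ⟨k₀, hk₀⟩ := eventually_atTop.1 (hmem1.and hmem2)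
  set v : ℕ → ℝ := fun k => u (k + k₀) with hvdef
  have hv : Tendsto v atTop (nhdsWithin rJ (Set.Ioi rJ)) := hu.comp (tendsto_add_atTop_nat k₀)
  have hvmem : ∀ k, rJ < v k ∧ v k < rJ + 1 := fun k => hk₀ (k + k₀) (by omega)
  have hvnhds : Tendsto v atTop (nhds rJ) := hv.mono_right nhdsWithin_le_nhds
  have hvge : ∀ k, ε ≤ hausdorffDist (Er (v k)) J := fun k => huge (k + k₀)
  have hrep : ∀ k : ℕ, ∃ p : (Euc n →L[ℝ] Euc n) × Euc n,
      LinearMap.det (p.1 : Euc n →ₗ[ℝ] Euc n) ≠ 0 ∧ Er (v k) = JohnAux.ellC p.1 p.2 := by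
    intro k
    obtain ⟨f, x, h1, h2⟩ := JohnAux.exists_ellC (hEr (v k) (hvmem k).1).1
    exact ⟨(f, x), h1, h2⟩
  choose F hFdet hFeq using hrep
  have hFbdd : ∀ k, F k ∈ closedBall (0 : (Euc n →L[ℝ] Euc n) × Euc n) (2 * R' + R') := by
    intro k
    have hsub : JohnAux.ellC (F k).1 (F k).2 ⊆ closedBall 0 R' := by
      rw [← hFeq]; exact hbdd (v k) (hvmem k).1 (hvmem k).2
    obtain ⟨h1, h2⟩ := JohnAux.params_bound_of_subset hsub
    rw [mem_closedBall_zero_iff, Prod.norm_def]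
    exact max_le (h2.trans (by linarith)) (h1.trans (by linarith))
  obtain ⟨⟨g, y⟩, -, φ, hφ, hφlim⟩ := tendsto_subseq_of_bounded (isBounded_closedBall) hFbdd
  have hglim : Tendsto (fun k => (F (φ k)).1) atTop (nhds g) :=
    (continuous_fst.tendsto _).comp hφlim
  have hylim : Tendsto (fun k => (F (φ k)).2) atTop (nhds y) :=
    (continuous_snd.tendsto _).comp hφlim
  set w : ℕ → ℝ := fun k => v (φ k) with hwdef
  have hw : Tendsto w atTop (nhds rJ) := hvnhds.comp hφ.tendsto_atTop
  have hdetF : ∀ k, |LinearMap.det (((F k).1 : Euc n →L[ℝ] Euc n) : Euc n →ₗ[ℝ] Euc n)|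
      = (v k) ^ n := by
    intro k
    apply hcancel _ _ (abs_nonneg _) (pow_nonneg (hrJ.trans (hvmem k).1).le n)
    rw [← JohnAux.volume_ellC, ← hFeq k]
    exact (hEr (v k) (hvmem k).1).2.1
  have hdetg_lim : Tendsto (fun k => |ContinuousLinearMap.det ((F (φ k)).1)|) atTop
      (nhds |ContinuousLinearMap.det g|) :=
    ((continuous_abs.comp ContinuousLinearMap.continuous_det).tendsto g).comp hglim
  have hdetg : |LinearMap.det (g : Euc n →ₗ[ℝ] Euc n)| = rJ ^ n := by
    have h2 : Tendsto (fun k => (w k) ^ n) atTop (nhds (rJ ^ n)) := hw.pow n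
    have h3 : (fun k => |ContinuousLinearMap.det ((F (φ k)).1)|) = fun k => (w k) ^ n :=
      funext fun k => hdetF (φ k)
    rw [h3] at hdetg_lim
    exact tendsto_nhds_unique hdetg_lim h2
  have hdetg_ne : LinearMap.det (g : Euc n →ₗ[ℝ] Euc n) ≠ 0 := by
    intro h
    rw [h, abs_zero] at hdetg
    exact (pow_pos hrJ n).ne' hdetg.symm
  -- E ⊆ K
  have hEK : JohnAux.ellC g y ⊆ K := by
    have hcont : Continuous fun z : Euc n => g z + y := by fun_prop
    have hsub : (fun z : Euc n => g z + y) '' ball 0 1 ⊆ K := by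
      rintro p ⟨b, hb, rfl⟩
      by_contra hp
      have hd : 0 < infDist (g b + y) K := (hKclosed.notMem_iff_infDist_pos hKne).1 hp
      set d := infDist (g b + y) K with hddef
      have hb1 : ‖b‖ < 1 := mem_ball_zero_iff.1 hb
      set t := min (1 - ‖b‖) (d / (2 * (‖g‖ + 1))) with htdef
      have ht0 : 0 < t := lt_min (by linarith) (by positivity)
      have hgt : ‖g‖ * t < d / 2 := by
        have h1 : ‖g‖ * t ≤ ‖g‖ * (d / (2 * (‖g‖ + 1))) :=
          mul_le_mul_of_nonneg_left (min_le_right _ _) (norm_nonneg g)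
        have h2 : ‖g‖ * (d / (2 * (‖g‖ + 1))) < d / 2 := by
          rw [← mul_div_assoc, div_lt_div_iff₀ (by positivity) (by norm_num)]
          nlinarith [norm_nonneg g]
        linarith
      have hball : closedBall b t ⊆ unitBall n := by
        have : t + dist b 0 ≤ 1 := by
          rw [dist_zero_right]
          have := min_le_left (1 - ‖b‖) (d / (2 * (‖g‖ + 1)))
          linarith [this]
        exact closedBall_subset_closedBall' this
      set δ := ENNReal.ofReal (rJ ^ n * t ^ n) * κ with hδdef
      have hδ0 : δ ≠ 0 :=
        mul_ne_zero (ENNReal.ofReal_pos.2 (by positivity)).ne' hκ0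
      have hev1 : ∀ᶠ k in atTop, ‖(F (φ k)).1 - g‖ < d / 8 := by
        have h1 : Tendsto (fun k => ‖(F (φ k)).1 - g‖) atTop (nhds 0) :=
          tendsto_iff_norm_sub_tendsto_zero.1 hglim
        exact h1.eventually_lt_const (by linarith)
      have hev2 : ∀ᶠ k in atTop, dist ((F (φ k)).2) y < d / 8 := by
        have h1 : Tendsto (fun k => dist ((F (φ k)).2) y) atTop (nhds 0) :=
          tendsto_iff_dist_tendsto_zero.1 hylim
        exact h1.eventually_lt_const (by linarith)
      have hev3 : ∀ᶠ k in atTop,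
          ENNReal.ofReal ((w k) ^ n) * κ < ENNReal.ofReal (rJ ^ n) * κ + δ := by
        have hlim : Tendsto (fun k => ENNReal.ofReal ((w k) ^ n) * κ) atTop
            (nhds (ENNReal.ofReal (rJ ^ n) * κ)) := by
          exact ENNReal.Tendsto.mul_const
            ((ENNReal.continuous_ofReal.tendsto _).comp (hw.pow n)) (Or.inr hκt)
        exact hlim.eventually_lt_const
          (ENNReal.lt_add_right (ENNReal.mul_ne_top ENNReal.ofReal_ne_top hκt) hδ0)
      obtain ⟨k, h1, h2, h3⟩ := (hev1.and (hev2.and hev3)).exists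
      have hchunksub : (fun z => (F (φ k)).1 z + (F (φ k)).2) '' closedBall b t
          ⊆ Er (w k) := by
        rw [show Er (w k) = JohnAux.ellC (F (φ k)).1 (F (φ k)).2 from hFeq (φ k)]
        exact Set.image_mono hball
      have hchunkK : ∀ p ∈ (fun z => (F (φ k)).1 z + (F (φ k)).2) '' closedBall b t,
          p ∉ K := by
        rintro p ⟨z, hz, rfl⟩ hpK
        have hzb : ‖z - b‖ ≤ t := by
          rw [← dist_eq_norm]; exact mem_closedBall.1 hz
        have hz1 : ‖z‖ ≤ 1 := by
          have e := norm_add_le (z - b) b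
          rw [sub_add_cancel] at e
          have := min_le_left (1 - ‖b‖) (d / (2 * (‖g‖ + 1)))
          linarith
        have hdistlt : dist ((F (φ k)).1 z + (F (φ k)).2) (g b + y) < d := by
          have e1 : dist ((F (φ k)).1 z) (g z) ≤ ‖(F (φ k)).1 - g‖ := by
            rw [dist_eq_norm]
            have : (F (φ k)).1 z - g z = ((F (φ k)).1 - g) z := by simp
            rw [this]
            exact (((F (φ k)).1 - g).le_opNorm z).trans
              (by nlinarith [norm_nonneg ((F (φ k)).1 - g)])
          have e2 : dist (g z) (g b) ≤ ‖g‖ * t := by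
            rw [dist_eq_norm, ← map_sub]
            exact (g.le_opNorm _).trans (mul_le_mul_of_nonneg_left hzb (norm_nonneg g))
          calc dist ((F (φ k)).1 z + (F (φ k)).2) (g b + y)
              ≤ dist ((F (φ k)).1 z) (g b) + dist ((F (φ k)).2) y := dist_add_add_le _ _ _ _
            _ ≤ (dist ((F (φ k)).1 z) (g z) + dist (g z) (g b)) + dist ((F (φ k)).2) y :=
                add_le_add_left (dist_triangle _ _ _) _
            _ < d := by linarith
        have hle : d ≤ dist (g b + y) ((F (φ k)).1 z + (F (φ k)).2) :=
          infDist_le_dist_of_mem hpK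
        rw [dist_comm] at hle
        linarith
      have hvchunk : δ ≤ volume ((fun z => (F (φ k)).1 z + (F (φ k)).2) '' closedBall b t) := by
        rw [JohnAux.volume_affine_image]
        have hcb : volume (closedBall b t) = ENNReal.ofReal (t ^ n) * κ := by
          rw [Measure.addHaar_closedBall _ _ ht0.le, finrank_euclideanSpace_fin, hκdef]
          congr 1
          exact (Measure.addHaar_unitClosedBall_eq_addHaar_unitBall volume).symm
        rw [hcb, hdetF (φ k), hδdef, ← mul_assoc,
          ← ENNReal.ofReal_mul (pow_nonneg (hrJ.trans (hvmem (φ k)).1).le n)]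
        apply mul_le_mul_left
        apply ENNReal.ofReal_le_ofReal
        have : rJ ^ n ≤ (w k) ^ n := pow_le_pow_left₀ hrJ.le (hvmem (φ k)).1.le n
        nlinarith [pow_nonneg ht0.le n]
      have hbig : ENNReal.ofReal (rJ ^ n) * κ + δ ≤ volume (Er (w k)) := by
        rw [← measure_inter_add_diff (Er (w k)) hKclosed.measurableSet]
        apply add_le_add
        · rw [Set.inter_comm, ← hvolJ]
          exact hlow (w k) (hvmem (φ k)).1
        · exact le_trans hvchunk (measure_mono (fun p hp => ⟨hchunksub hp, hchunkK p hp⟩))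
      have hvEk : volume (Er (w k)) = ENNReal.ofReal ((w k) ^ n) * κ :=
        (hEr (w k) (hvmem (φ k)).1).2.1
      rw [hvEk] at hbig
      exact absurd h3 (not_lt.2 hbig)
    calc JohnAux.ellC g y = (fun z : Euc n => g z + y) '' closure (ball 0 1) := by
          rw [JohnAux.ellC, unitBall, closure_ball (0 : Euc n) one_ne_zero]
      _ ⊆ closure ((fun z : Euc n => g z + y) '' ball 0 1) :=
          image_closure_subset_closure_image hcont
      _ ⊆ closure K := closure_mono hsub
      _ = K := hKclosed.closure_eq
  have hEvol : volume (JohnAux.ellC g y) = volume J := by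
    rw [JohnAux.volume_ellC, hdetg, hvolJ]
  have hEJ : JohnAux.ellC g y = J :=
    hJuniq _ (JohnAux.isEllipsoid_ellC y hdetg_ne) hEK hEvol
  have hfinal : Tendsto (fun k => hausdorffDist (Er (w k)) J) atTop (nhds 0) := by
    apply squeeze_zero (g := fun k => ‖(F (φ k)).1 - g‖ + dist ((F (φ k)).2) y)
      (fun k => hausdorffDist_nonneg)
    · intro k
      rw [show Er (w k) = JohnAux.ellC (F (φ k)).1 (F (φ k)).2 from hFeq (φ k), ← hEJ]
      exact JohnAux.hausdorffDist_ellC_le _ _ _ _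
    · have h1 : Tendsto (fun k => ‖(F (φ k)).1 - g‖) atTop (nhds 0) :=
        tendsto_iff_norm_sub_tendsto_zero.1 hglim
      have h2 : Tendsto (fun k => dist ((F (φ k)).2) y) atTop (nhds 0) :=
        tendsto_iff_dist_tendsto_zero.1 hylim
      have hsum := h1.add h2
      rw [add_zero] at hsum
      exact hsum
  have hltε := (hfinal.eventually_lt_const hε).exists
  obtain ⟨k, hk⟩ := hltε
  exact absurd (hvge (φ k)) (not_le.2 hk)
end
end

section
/- Let K be a centrally symmetric convex body in R^n and r_J > 0 defined by vol_n(J(K)) = r_J^n κ_n. Then K is in maximal intersection position of radius r_J (i.e., vol_n(K ∩ r_J B) ≥ vol_n(K ∩ r_J T(B)) for all T ∈ SL_n) if and only if r_J^{-1} K is in John position, i.e., the John ellipsoid of r_J^{-1} K is the unit ball. -/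
open MeasureTheory Metric Set Filter Pointwise
open scoped ENNReal

noncomputable section

section AuxLemmas

variable {n : ℕ}

lemma euc_vol_smul (r : ℝ) (hr : 0 ≤ r) (s : Set (Euc n)) :
    volume (r • s) = ENNReal.ofReal (r ^ n) * volume s := by
  rw [MeasureTheory.Measure.addHaar_smul volume r s, finrank_euclideanSpace_fin,
    abs_of_nonneg (pow_nonneg hr n)]

lemma euc_vol_unitBall_pos : 0 < volume (unitBall n) :=
  measure_closedBall_pos volume 0 one_pos

lemma euc_vol_unitBall_ne_top : volume (unitBall n) ≠ ⊤ :=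
  measure_closedBall_lt_top.ne

lemma euc_vol_translate (x : Euc n) (s : Set (Euc n)) :
    volume ((fun y => y + x) '' s) = volume s := by
  simp [Set.image_add_right, measure_preimage_add_right]

lemma euc_vol_linimg (f : Euc n →ₗ[ℝ] Euc n) (s : Set (Euc n)) :
    volume (f '' s) = ENNReal.ofReal |LinearMap.det f| * volume s :=
  MeasureTheory.Measure.addHaar_image_linearMap volume f s

lemma euc_vol_ellipsoid (T : Euc n ≃ₗ[ℝ] Euc n) (x : Euc n) :
    volume ((fun y => T y + x) '' unitBall n)
      = ENNReal.ofReal |LinearMap.det (T : Euc n →ₗ[ℝ] Euc n)| * volume (unitBall n) := by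
  have h1 : (fun y => T y + x) '' unitBall n
      = (fun z => z + x) '' ((T : Euc n →ₗ[ℝ] Euc n) '' unitBall n) := by
    rw [Set.image_image]
    rfl
  rw [h1, euc_vol_translate, euc_vol_linimg]


lemma euc_smul_unitBall (r : ℝ) (hr : 0 < r) :
    r • unitBall n = closedBall (0 : Euc n) r := by
  unfold unitBall
  rw [_root_.smul_closedBall _ _ zero_le_one]
  simp [abs_of_pos hr, Real.norm_eq_abs]

lemma euc_refl_exists (hn : 0 < n) :
    ∃ g : Euc n →ₗ[ℝ] Euc n, LinearMap.det g = -1 ∧ g '' unitBall n = unitBall n := by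
  classical
  set i₀ : Fin n := ⟨0, hn⟩
  set c : Fin n → ℝ := fun i => if i = i₀ then -1 else 1 with hc
  have hc1 : ∀ i, c i * c i = 1 := by intro i; by_cases h : i = i₀ <;> simp [hc, h]
  have hcabs : ∀ i, |c i| = 1 := by intro i; by_cases h : i = i₀ <;> simp [hc, h]
  set M : Matrix (Fin n) (Fin n) ℝ := Matrix.diagonal c with hM
  refine ⟨Matrix.toEuclideanLin M, ?_, ?_⟩
  · have h1 : LinearMap.det (Matrix.toEuclideanLin M) = M.det := by
      set e := WithLp.linearEquiv 2 ℝ (Fin n → ℝ) with he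
      have heq : Matrix.toEuclideanLin M
          = (e.symm : (Fin n → ℝ) →ₗ[ℝ] Euc n) ∘ₗ Matrix.toLin' M
            ∘ₗ ((e.symm.symm : Euc n ≃ₗ[ℝ] (Fin n → ℝ)) : Euc n →ₗ[ℝ] (Fin n → ℝ)) := rfl
      rw [heq, LinearMap.det_conj, LinearMap.det_toLin']
    rw [h1, hM, Matrix.det_diagonal]
    rw [show (∏ i, c i) = -1 from ?_]
    calc ∏ i, c i = c i₀ * ∏ i ∈ Finset.univ.erase i₀, c i := by
          rw [Finset.mul_prod_erase _ _ (Finset.mem_univ i₀)]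
      _ = -1 := by
          rw [Finset.prod_eq_one (fun i hi => by simp [hc, Finset.ne_of_mem_erase hi])]
          simp [hc]
  · have happ : ∀ (x : Euc n) (i : Fin n), (Matrix.toEuclideanLin M x) i = c i * x i := by
      intro x i
      rw [Matrix.toEuclideanLin_apply]
      show Matrix.mulVec M (fun j => x j) i = c i * x i
      rw [hM, Matrix.mulVec_diagonal]
    have hnorm : ∀ x : Euc n, ‖Matrix.toEuclideanLin M x‖ = ‖x‖ := by
      intro x
      rw [EuclideanSpace.norm_eq, EuclideanSpace.norm_eq]
      congr 1
      refine Finset.sum_congr rfl fun i _ => ?_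
      rw [happ, norm_mul, Real.norm_eq_abs (c i), hcabs, one_mul]
    have hinv : ∀ x : Euc n, Matrix.toEuclideanLin M (Matrix.toEuclideanLin M x) = x := by
      intro x
      ext i
      rw [happ, happ, ← mul_assoc, hc1, one_mul]
    ext z
    simp only [unitBall, Set.mem_image, mem_closedBall_zero_iff]
    constructor
    · rintro ⟨y, hy, rfl⟩; rwa [hnorm]
    · intro hz; exact ⟨Matrix.toEuclideanLin M z, by rwa [hnorm], hinv z⟩

end AuxLemmas

theorem maxIntersectionPos_rJ_iff_john (n : ℕ) (K : Set (Euc n))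
    (hKconv : Convex ℝ K) (hKcomp : IsCompact K) (hKint : (interior K).Nonempty)
    (hKsymm : K = -K)
    (J : Set (Euc n)) (hJe : IsEllipsoid n J) (hJsub : J ⊆ K)
    (hJmax : ∀ s : Set (Euc n), IsEllipsoid n s → s ⊆ K → volume s ≤ volume J)
    (rJ : ℝ) (hrJ : 0 < rJ)
    (hvolJ : volume J = ENNReal.ofReal (rJ ^ n) * volume (unitBall n)) :
    MaxIntersectionPos n K rJ ↔
      (unitBall n ⊆ rJ⁻¹ • K ∧
        ∀ s : Set (Euc n), IsEllipsoid n s → s ⊆ rJ⁻¹ • K →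
          volume s ≤ volume (unitBall n)) := by
  have hκ0 : volume (unitBall n) ≠ 0 := euc_vol_unitBall_pos.ne'
  have hκt : volume (unitBall n) ≠ ⊤ := euc_vol_unitBall_ne_top
  have hr0 : ENNReal.ofReal (rJ ^ n) ≠ 0 := by
    rw [Ne, ENNReal.ofReal_eq_zero, not_le]; positivity
  have hrt : ENNReal.ofReal (rJ ^ n) ≠ ⊤ := ENNReal.ofReal_ne_top
  have hsecond : ∀ s : Set (Euc n), IsEllipsoid n s → s ⊆ rJ⁻¹ • K →
      volume s ≤ volume (unitBall n) := by
    intro s hse hssub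
    have hsub' : rJ • s ⊆ K := by
      intro z hz
      obtain ⟨w, hw, rfl⟩ := Set.mem_smul_set.mp hz
      obtain ⟨k, hk, hwk⟩ := Set.mem_smul_set.mp (hssub hw)
      rw [← hwk, smul_smul, mul_inv_cancel₀ hrJ.ne', one_smul]
      exact hk
    have he' : IsEllipsoid n (rJ • s) := by
      obtain ⟨T, x, rfl⟩ := hse
      refine ⟨T ≪≫ₗ LinearEquiv.smulOfNeZero ℝ _ rJ hrJ.ne', rJ • x, ?_⟩
      rw [← Set.image_smul, Set.image_image]
      refine Set.image_congr fun y _ => ?_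
      simp [smul_add]
    have hv : volume (rJ • s) = ENNReal.ofReal (rJ ^ n) * volume s :=
      euc_vol_smul rJ hrJ.le s
    have hle := hJmax (rJ • s) he' hsub'
    rw [hvolJ, hv] at hle
    exact (ENNReal.mul_le_mul_iff_right hr0 hrt).mp hle
  constructor
  · intro hmax
    refine ⟨?_, hsecond⟩
    obtain ⟨T, x, hJ⟩ := hJe
    set f : Euc n →ₗ[ℝ] Euc n := (T : Euc n →ₗ[ℝ] Euc n) with hf
    have hJ0K : f '' unitBall n ⊆ K := by
      rintro _ ⟨y, hy, rfl⟩
      have h1 : T y + x ∈ K := hJsub (by rw [hJ]; exact ⟨y, hy, rfl⟩)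
      have hy' : -y ∈ unitBall n := by
        simpa [unitBall, mem_closedBall_zero_iff] using hy
      have h2 : T (-y) + x ∈ K := hJsub (by rw [hJ]; exact ⟨-y, hy', rfl⟩)
      have h2' : -(T (-y) + x) ∈ K := by
        rw [hKsymm]; exact Set.neg_mem_neg.mpr h2
      have hcvx := hKconv h1 h2' (by norm_num : (0:ℝ) ≤ 1/2)
        (by norm_num : (0:ℝ) ≤ 1/2) (by norm_num)
      have heq : (1/2 : ℝ) • (T y + x) + (1/2 : ℝ) • (-(T (-y) + x)) = f y := by
        simp only [map_neg]
        module
      rwa [heq] at hcvx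
    have hdetf : |LinearMap.det f| = rJ ^ n := by
      have h1 : ENNReal.ofReal (rJ ^ n) * volume (unitBall n)
          = ENNReal.ofReal |LinearMap.det f| * volume (unitBall n) := by
        rw [← hvolJ, hJ, euc_vol_ellipsoid]
      have h2 : ENNReal.ofReal (rJ ^ n) = ENNReal.ofReal |LinearMap.det f| :=
        le_antisymm ((ENNReal.mul_le_mul_iff_left hκ0 hκt).mp h1.le)
          ((ENNReal.mul_le_mul_iff_left hκ0 hκt).mp h1.ge)
      exact ((ENNReal.ofReal_eq_ofReal_iff (pow_nonneg hrJ.le n) (abs_nonneg _)).mp h2).symm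
    set S₀ : Euc n →ₗ[ℝ] Euc n := rJ⁻¹ • f with hS₀
    have hS₀f : rJ • S₀ = f := by
      rw [hS₀, smul_smul, mul_inv_cancel₀ hrJ.ne', one_smul]
    have himg : rJ • (S₀ '' unitBall n) = f '' unitBall n := by
      rw [← Set.image_smul, Set.image_image]
      refine Set.image_congr fun y _ => ?_
      rw [hS₀, LinearMap.smul_apply, smul_smul, mul_inv_cancel₀ hrJ.ne', one_smul, hf]
    have hS₀det : |LinearMap.det S₀| = 1 := by
      have hd : LinearMap.det S₀ = rJ⁻¹ ^ n * LinearMap.det f := by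
        rw [hS₀, LinearMap.det_smul, finrank_euclideanSpace_fin]
      rw [hd, abs_mul, abs_pow, abs_inv, abs_of_pos hrJ, hdetf, inv_pow,
        inv_mul_cancel₀ (pow_pos hrJ n).ne']
    have key : ENNReal.ofReal (rJ ^ n) * volume (unitBall n)
        ≤ volume (K ∩ rJ • unitBall n) := by
      have hvol0 : volume (f '' unitBall n)
          = ENNReal.ofReal (rJ ^ n) * volume (unitBall n) := by
        rw [euc_vol_linimg, hdetf]
      rcases (abs_eq (by norm_num : (0:ℝ) ≤ 1)).mp hS₀det with hdet1 | hdetm1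
      · have hm := hmax S₀ hdet1
        rwa [himg, Set.inter_eq_right.mpr hJ0K, hvol0] at hm
      · rcases Nat.eq_zero_or_pos n with hn0 | hn
        · exfalso
          have hone : LinearMap.det S₀ = 1 :=
            LinearMap.det_eq_one_of_finrank_eq_zero
              (by rw [finrank_euclideanSpace_fin, hn0]) S₀
          rw [hone] at hdetm1; norm_num at hdetm1
        · obtain ⟨g, hgdet, hgball⟩ := euc_refl_exists hn
          have hdet1 : LinearMap.det (S₀ ∘ₗ g) = 1 := by
            rw [LinearMap.det_comp, hdetm1, hgdet]; norm_num
          have hm := hmax (S₀ ∘ₗ g) hdet1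
          have himg2 : (S₀ ∘ₗ g) '' unitBall n = S₀ '' unitBall n := by
            rw [LinearMap.coe_comp, Set.image_comp, hgball]
          rwa [himg2, himg, Set.inter_eq_right.mpr hJ0K, hvol0] at hm
    have hballK : closedBall (0 : Euc n) rJ ⊆ K := by
      set B' := closedBall (0 : Euc n) rJ with hB'
      have hvB' : volume B' = ENNReal.ofReal (rJ ^ n) * volume (unitBall n) := by
        rw [hB', ← euc_smul_unitBall rJ hrJ, euc_vol_smul rJ hrJ.le]
      have hKB : volume (K ∩ B') = volume B' := by
        refine le_antisymm (measure_mono Set.inter_subset_right) ?_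
        rw [euc_smul_unitBall rJ hrJ] at key
        rw [hvB']
        exact key
      have hfin : volume (K ∩ B') ≠ ⊤ :=
        (lt_of_le_of_lt (measure_mono Set.inter_subset_right)
          measure_closedBall_lt_top).ne
      have hmeasKB : NullMeasurableSet (K ∩ B') volume :=
        (hKcomp.isClosed.measurableSet.inter measurableSet_closedBall).nullMeasurableSet
      have h0 : volume (B' \ K) = 0 := by
        have hd : B' \ K = B' \ (K ∩ B') := by
          rw [Set.diff_inter_self_eq_diff]
        rw [hd, measure_diff Set.inter_subset_right hmeasKB hfin, hKB, tsub_self]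
      intro z hz
      by_contra hzK
      obtain ⟨ε, hε, hballε⟩ :=
        Metric.isOpen_iff.mp hKcomp.isClosed.isOpen_compl z hzK
      have hzcl : z ∈ closure (ball (0 : Euc n) rJ) := by
        rw [closure_ball 0 hrJ.ne']; exact hz
      obtain ⟨w, hw1, hw2⟩ := Metric.mem_closure_iff.mp hzcl ε hε
      have hUopen : IsOpen (ball z ε ∩ ball (0 : Euc n) rJ) :=
        isOpen_ball.inter isOpen_ball
      have hUne : (ball z ε ∩ ball (0 : Euc n) rJ).Nonempty :=
        ⟨w, Metric.mem_ball.mpr (by rw [dist_comm]; exact hw2), hw1⟩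
      have hUsub : ball z ε ∩ ball (0 : Euc n) rJ ⊆ B' \ K := fun u hu =>
        ⟨ball_subset_closedBall hu.2, fun huK => hballε hu.1 huK⟩
      exact (hUopen.measure_pos volume hUne).ne'
        (le_antisymm (h0 ▸ measure_mono hUsub) (zero_le))
    intro b hb
    refine Set.mem_smul_set.mpr ⟨rJ • b, hballK ?_, ?_⟩
    · rw [mem_closedBall_zero_iff, norm_smul, Real.norm_eq_abs, abs_of_pos hrJ]
      have hb1 : ‖b‖ ≤ 1 := by rwa [unitBall, mem_closedBall_zero_iff] at hb
      exact mul_le_of_le_one_right hrJ.le hb1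
    · rw [smul_smul, inv_mul_cancel₀ hrJ.ne', one_smul]
  · rintro ⟨h1, -⟩ T hT
    have hball : rJ • unitBall n ⊆ K := by
      intro z hz
      obtain ⟨b, hb, rfl⟩ := Set.mem_smul_set.mp hz
      obtain ⟨k, hk, hbk⟩ := Set.mem_smul_set.mp (h1 hb)
      rw [← hbk, smul_smul, mul_inv_cancel₀ hrJ.ne', one_smul]
      exact hk
    calc volume (K ∩ rJ • (T '' unitBall n))
        ≤ volume (rJ • (T '' unitBall n)) := measure_mono Set.inter_subset_right
      _ = ENNReal.ofReal (rJ ^ n) * volume (T '' unitBall n) :=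
          euc_vol_smul rJ hrJ.le _
      _ = ENNReal.ofReal (rJ ^ n) * volume (unitBall n) := by
          rw [euc_vol_linimg, hT]; norm_num
      _ = volume (rJ • unitBall n) := (euc_vol_smul rJ hrJ.le _).symm
      _ = volume (K ∩ rJ • unitBall n) := by rw [Set.inter_eq_right.mpr hball]
end
end
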